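/- Let A, C be continuous and bounded matrix-valued functions on [0,∞) of sizes n×n and p×n, let B be a continuous bounded n×m matrix function, let E : [0,∞) → ℝ^{p×p} be continuous with E(t) = E(t)' ≥ ε₀I for some ε₀ > 0, let R = R' > 0 be positive definite, γ > 0, and X = X' > 0. Suppose Y : [0,∞) → ℝ^{n×n} is a differentiable symmetric-matrix-valued function satisfying α₁I ≤ Y(t) ≤ α₂I for some α₁, α₂ > 0 and solving Ẏ = A(t)Y + YA(t)' − Y(C(t)'E(t)⁻¹C(t) − γ⁻²R)Y + B(t)B(t)', Y(0) = X⁻¹. Define L(t) = Y(t)C(t)'E(t)⁻¹. Then the unforced closed-loop system ż = (A(t) − L(t)C(t))z is exponentially stable: there exist constants c > 0 and λ > 0 such that every solution satisfies ‖z(t)‖ ≤ c e^{−λt} ‖z(0)‖ for all t ≥ 0. -/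

import Mathlib

/-!
With `P = Y⁻¹` take `V = zᵀ P z`. Since `Ṗ = -P Ẏ P`, the Riccati equation collapses the
derivative of `V` along `ż = (A - LC) z` to `V̇ = -zᵀ CᵀE⁻¹C z - γ⁻² zᵀ R z - |Bᵀ P z|²`,
which is at most `-γ⁻² μ |z|² ≤ -γ⁻² μ α₁ V` once `μ I ≤ R` and `P ≤ α₁⁻¹ I`. So `V` decays like
`e^{-Kt}` with `K = γ⁻² μ α₁`, and the sandwich `α₂⁻¹ |z|² ≤ V ≤ α₁⁻¹ |z|²` turns this into
`|z(t)| ≤ √(α₂ / α₁) e^{-Kt/2} |z(0)|`.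
-/

open Matrix Set Real
open scoped MatrixOrder

namespace Matrix

variable {n : Type*} [Fintype n] [DecidableEq n]

omit [Fintype n] in
theorem PosDef.of_smul_one_le {Y : Matrix n n ℝ} {α : ℝ} (hα : 0 < α) (h : α • 1 ≤ Y) :
    Y.PosDef := by
  simpa using (PosDef.one.smul hα).add_posSemidef h

theorem PosDef.exists_pos_smul_one_le {R : Matrix n n ℝ} (hR : R.PosDef) :
    ∃ μ : ℝ, 0 < μ ∧ μ • (1 : Matrix n n ℝ) ≤ R := by
  cases subsingleton_or_nontrivial (Matrix n n ℝ)
  · exact ⟨1, one_pos, by rw [Subsingleton.elim ((1 : ℝ) • 1 : Matrix n n ℝ) R]⟩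
  simp_rw [← Algebra.algebraMap_eq_smul_one]
  rw [CFC.exists_pos_algebraMap_le_iff hR.isHermitian.isSelfAdjoint]
  exact fun x hx => (isStrictlyPositive_iff_posDef.2 hR).spectrum_pos hx

theorem spectrum_nonsing_inv {Y : Matrix n n ℝ} (hY : IsUnit Y) :
    spectrum ℝ Y⁻¹ = (spectrum ℝ Y)⁻¹ := by
  lift Y to (Matrix n n ℝ)ˣ using hY
  rw [spectrum.map_inv, coe_units_inv]

theorem inv_le_smul_one_of_smul_one_le {Y : Matrix n n ℝ} {α : ℝ} (hα : 0 < α)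
    (h : α • 1 ≤ Y) : Y⁻¹ ≤ α⁻¹ • 1 := by
  have hY := PosDef.of_smul_one_le hα h
  rw [← Algebra.algebraMap_eq_smul_one] at h ⊢
  rw [algebraMap_le_iff_le_spectrum (ha := hY.isHermitian.isSelfAdjoint)] at h
  rw [le_algebraMap_iff_spectrum_le (ha := hY.inv.isHermitian.isSelfAdjoint),
    spectrum_nonsing_inv hY.isUnit]
  exact fun x hx => by simpa using inv_anti₀ hα (h _ (mem_inv.1 hx))

theorem smul_one_le_inv_of_le_smul_one {Y : Matrix n n ℝ} {α : ℝ} (hY : Y.PosDef)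
    (h : Y ≤ α • 1) : α⁻¹ • 1 ≤ Y⁻¹ := by
  rw [← Algebra.algebraMap_eq_smul_one] at h ⊢
  rw [le_algebraMap_iff_spectrum_le (ha := hY.isHermitian.isSelfAdjoint)] at h
  rw [algebraMap_le_iff_le_spectrum (ha := hY.inv.isHermitian.isSelfAdjoint),
    spectrum_nonsing_inv hY.isUnit]
  intro x hx
  have hpos : 0 < x⁻¹ := (isStrictlyPositive_iff_posDef.2 hY).spectrum_pos hx
  simpa using inv_anti₀ hpos (h _ (mem_inv.1 hx))

omit [DecidableEq n] in
theorem dotProduct_mulVec_le_of_le {A B : Matrix n n ℝ} (h : A ≤ B) (x : n → ℝ) :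
    x ⬝ᵥ A *ᵥ x ≤ x ⬝ᵥ B *ᵥ x := by
  have := (le_iff.1 h).dotProduct_mulVec_nonneg x
  simpa [sub_mulVec] using this

theorem dotProduct_smul_one_mulVec (c : ℝ) (x : n → ℝ) :
    x ⬝ᵥ (c • (1 : Matrix n n ℝ)) *ᵥ x = c * (x ⬝ᵥ x) := by
  rw [smul_mulVec, one_mulVec, dotProduct_smul, smul_eq_mul]

theorem dotProduct_inv_mulVec_le {Y : Matrix n n ℝ} {α : ℝ} (hα : 0 < α) (h : α • 1 ≤ Y)
    (x : n → ℝ) : x ⬝ᵥ Y⁻¹ *ᵥ x ≤ α⁻¹ * (x ⬝ᵥ x) := by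
  simpa only [dotProduct_smul_one_mulVec] using
    dotProduct_mulVec_le_of_le (inv_le_smul_one_of_smul_one_le hα h) x

theorem inv_mul_dotProduct_le_dotProduct_inv_mulVec {Y : Matrix n n ℝ} {α : ℝ} (hY : Y.PosDef)
    (h : Y ≤ α • 1) (x : n → ℝ) : α⁻¹ * (x ⬝ᵥ x) ≤ x ⬝ᵥ Y⁻¹ *ᵥ x := by
  simpa only [dotProduct_smul_one_mulVec] using
    dotProduct_mulVec_le_of_le (smul_one_le_inv_of_le_smul_one hY h) x

end Matrix

theorem Matrix.riccati_lyapunov_identity {n α : Type*} [Fintype n] [DecidableEq n] [CommRing α]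
    {A Y P G S Q : Matrix n n α} (hPY : P * Y = 1) (hYP : Y * P = 1) (hY : Yᵀ = Y)
    (hG : Gᵀ = G) :
    (A - Y * G)ᵀ * P + P * (A - Y * G) - P * (A * Y + Y * Aᵀ - Y * (G - S) * Y + Q) * P
      = -G - S - P * Q * P := by
  have hPYX : ∀ X : Matrix n n α, P * (Y * X) = X := fun X => by
    rw [← Matrix.mul_assoc, hPY, Matrix.one_mul]
  simp only [transpose_sub, transpose_mul, hY, hG, Matrix.sub_mul, Matrix.mul_sub,
    Matrix.mul_add, Matrix.add_mul, Matrix.mul_assoc, hYP, hPYX, Matrix.mul_one]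
  abel

theorem Matrix.dotProduct_mulVec_riccati_le {n m p : Type*} [Fintype n] [Fintype m] [Fintype p]
    [DecidableEq p] {B : Matrix n m ℝ} {C : Matrix p n ℝ} {E : Matrix p p ℝ} {P R : Matrix n n ℝ}
    (hE : E.PosDef) (hP : P.IsHermitian) (g : ℝ) (z : n → ℝ) :
    z ⬝ᵥ (-(Cᵀ * E⁻¹ * C) - g • R - P * (B * Bᵀ) * P) *ᵥ z ≤ -(g * (z ⬝ᵥ R *ᵥ z)) := by
  have hG : (Cᵀ * E⁻¹ * C).PosSemidef := by
    simpa using hE.inv.posSemidef.conjTranspose_mul_mul_same C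
  have hQ : (P * (B * Bᵀ) * P).PosSemidef := by
    have hPsymm : Pᵀ = P := by simpa using hP.eq
    simpa [hPsymm] using (posSemidef_self_mul_conjTranspose B).mul_mul_conjTranspose_same P
  have hle : -(Cᵀ * E⁻¹ * C) - g • R - P * (B * Bᵀ) * P ≤ -(g • R) := by
    rw [le_iff, show ∀ G S Q : Matrix n n ℝ, -S - (-G - S - Q) = G + Q by intros; abel]
    exact hG.add hQ
  simpa [neg_mulVec, smul_mulVec] using dotProduct_mulVec_le_of_le hle z

theorem le_mul_exp_of_hasDerivWithinAt_le_mul {f f' : ℝ → ℝ} {a K : ℝ}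
    (hf : ∀ x ∈ Ici a, HasDerivWithinAt f (f' x) (Ici a) x)
    (bound : ∀ x ∈ Ici a, f' x ≤ K * f x) {x : ℝ} (hx : a ≤ x) :
    f x ≤ f a * exp (K * (x - a)) := by
  set g : ℝ → ℝ := fun y => f y * exp (-(K * y))
  have hg : ∀ y ∈ Ici a, HasDerivWithinAt g ((f' y - K * f y) * exp (-(K * y))) (Ici a) y :=
    fun y hy => by
      have he : HasDerivAt (fun y => exp (-(K * y))) (exp (-(K * y)) * -K) y := by
        simpa using ((hasDerivAt_id y).const_mul K).neg.exp
      exact ((hf y hy).fun_mul he.hasDerivWithinAt).congr_deriv (by ring)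
  have hanti : AntitoneOn g (Ici a) := by
    refine antitoneOn_of_hasDerivWithinAt_nonpos (f' := fun y => (f' y - K * f y) * exp (-(K * y)))
      (convex_Ici a)
      (fun y hy => (hg y hy).continuousWithinAt) (fun y hy => ?_) (fun y hy => ?_)
    · rw [interior_Ici] at hy ⊢
      exact (hg y (Ioi_subset_Ici_self hy)).mono Ioi_subset_Ici_self
    · rw [interior_Ici] at hy
      exact mul_nonpos_of_nonpos_of_nonneg
        (sub_nonpos.2 (bound y (Ioi_subset_Ici_self hy))) (exp_pos _).le
  calc f x = g x * exp (K * x) := by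
        simp only [g, mul_assoc, ← exp_add, neg_add_cancel, exp_zero, mul_one]
    _ ≤ g a * exp (K * x) := by gcongr; exact hanti self_mem_Ici hx hx
    _ = f a * exp (K * (x - a)) := by simp only [g, mul_assoc, ← exp_add]; ring_nf

theorem sqrt_le_sqrt_div_mul_exp_of_sandwich {a b V₀ V₁ α₁ α₂ K t : ℝ} (hα₁ : 0 < α₁)
    (hα₂ : 0 < α₂) (ha : α₂⁻¹ * a ≤ V₁) (hV : V₁ ≤ V₀ * exp (-K * t))
    (hV₀ : V₀ ≤ α₁⁻¹ * b) :
    √a ≤ √(α₂ / α₁) * exp (-(K / 2) * t) * √b := by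
  rw [← sqrt_sq (exp_pos (-(K / 2) * t)).le, ← sqrt_mul (by positivity), ← sqrt_mul (by positivity)]
  refine sqrt_le_sqrt ?_
  calc a ≤ α₂ * V₁ := (inv_mul_le_iff₀ hα₂).1 ha
    _ ≤ α₂ * (V₀ * exp (-K * t)) := by gcongr
    _ ≤ α₂ * (α₁⁻¹ * b * exp (-K * t)) := by gcongr
    _ = α₂ / α₁ * exp (-(K / 2) * t) ^ 2 * b := by
      rw [sq, ← exp_add]
      ring_nf

section

-- Any norm gives the same derivatives; the `L∞` operator norm is chosen because it makes matrices
-- a normed algebra, which the derivative of the inverse needs.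
attribute [local instance] Matrix.linftyOpNormedAddCommGroup Matrix.linftyOpNormedSpace
  Matrix.linftyOpNormedRing Matrix.linftyOpNormedAlgebra

variable {m n : Type*} [Fintype m] [Fintype n] {s : Set ℝ} {t : ℝ}

theorem Matrix.hasDerivWithinAt_iff {Y : ℝ → Matrix m n ℝ} {Y' : Matrix m n ℝ} :
    HasDerivWithinAt Y Y' s t ↔ ∀ i j, HasDerivWithinAt (fun u => Y u i j) (Y' i j) s t := by
  let e : Matrix m n ℝ ≃L[ℝ] (m → n → ℝ) := (Matrix.ofLinearEquiv ℝ).symm.toContinuousLinearEquiv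
  have key : HasDerivWithinAt Y Y' s t ↔ HasDerivWithinAt (e ∘ Y) (e Y') s t := by
    refine ⟨fun h => e.hasFDerivAt.comp_hasDerivWithinAt t h, fun h => ?_⟩
    have := e.symm.hasFDerivAt.comp_hasDerivWithinAt t h
    simp only [Function.comp_def] at this
    exact this
  rw [key, hasDerivWithinAt_pi]
  exact forall_congr' fun i => hasDerivWithinAt_pi

theorem HasDerivWithinAt.dotProduct {u v : ℝ → n → ℝ} {u' v' : n → ℝ}
    (hu : HasDerivWithinAt u u' s t) (hv : HasDerivWithinAt v v' s t) :
    HasDerivWithinAt (fun x => u x ⬝ᵥ v x) (u' ⬝ᵥ v t + u t ⬝ᵥ v') s t := by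
  have := HasDerivWithinAt.fun_sum (u := Finset.univ) fun i _ =>
    (hasDerivWithinAt_pi.1 hu i).mul (hasDerivWithinAt_pi.1 hv i)
  simp only [Pi.mul_apply, Finset.sum_add_distrib] at this
  exact this

theorem HasDerivWithinAt.mulVec {P : ℝ → Matrix m n ℝ} {P' : Matrix m n ℝ} {v : ℝ → n → ℝ}
    {v' : n → ℝ} (hP : HasDerivWithinAt P P' s t) (hv : HasDerivWithinAt v v' s t) :
    HasDerivWithinAt (fun x => P x *ᵥ v x) (P' *ᵥ v t + P t *ᵥ v') s t :=
  hasDerivWithinAt_pi.2 fun i =>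
    (hasDerivWithinAt_pi.2 (Matrix.hasDerivWithinAt_iff.1 hP i)).dotProduct hv

theorem HasDerivWithinAt.nonsing_inv [DecidableEq n] {Y : ℝ → Matrix n n ℝ} {Y' : Matrix n n ℝ}
    (hY : HasDerivWithinAt Y Y' s t) (ht : IsUnit (Y t)) :
    HasDerivWithinAt (fun u => (Y u)⁻¹) (-((Y t)⁻¹ * Y' * (Y t)⁻¹)) s t := by
  obtain ⟨u, hu⟩ := ht
  have := (hu ▸ hasFDerivAt_ringInverse (𝕜 := ℝ) u).comp_hasDerivWithinAt t hY
  simp only [Function.comp_def, ← Matrix.nonsing_inv_eq_ringInverse, Matrix.coe_units_inv,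
    hu] at this
  exact this

theorem HasDerivWithinAt.dotProduct_inv_mulVec [DecidableEq n] {Y : ℝ → Matrix n n ℝ}
    {Y' F : Matrix n n ℝ} {z : ℝ → n → ℝ}
    (hY : ∀ i j, HasDerivWithinAt (fun u => Y u i j) (Y' i j) s t) (ht : IsUnit (Y t))
    (hz : HasDerivWithinAt z (F *ᵥ z t) s t) :
    HasDerivWithinAt (fun u => z u ⬝ᵥ (Y u)⁻¹ *ᵥ z u)
      (z t ⬝ᵥ (Fᵀ * (Y t)⁻¹ + (Y t)⁻¹ * F - (Y t)⁻¹ * Y' * (Y t)⁻¹) *ᵥ z t) s t := by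
  refine (hz.dotProduct (((hasDerivWithinAt_iff.2 hY).nonsing_inv ht).mulVec hz)).congr_deriv ?_
  simp only [add_mulVec, sub_mulVec, dotProduct_add, dotProduct_sub, neg_mulVec, dotProduct_neg,
    ← mulVec_mulVec, dotProduct_mulVec _ Fᵀ, vecMul_transpose]
  ring

theorem hasDerivWithinAt_riccati_lyapunov {p m : Type*} [Fintype p] [DecidableEq p] [Fintype m]
    [DecidableEq n] {A R : Matrix n n ℝ} {B : Matrix n m ℝ} {C : Matrix p n ℝ} {E : Matrix p p ℝ}
    {g : ℝ} {Y : ℝ → Matrix n n ℝ} {z : ℝ → n → ℝ} (hY : (Y t).PosDef) (hE : E.IsHermitian)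
    (hRiccati : ∀ i j, HasDerivWithinAt (fun u => Y u i j)
      ((A * Y t + Y t * Aᵀ - Y t * (Cᵀ * E⁻¹ * C - g • R) * Y t + B * Bᵀ) i j) s t)
    (hz : HasDerivWithinAt z ((A - Y t * Cᵀ * E⁻¹ * C) *ᵥ z t) s t) :
    HasDerivWithinAt (fun u => z u ⬝ᵥ (Y u)⁻¹ *ᵥ z u)
      (z t ⬝ᵥ (-(Cᵀ * E⁻¹ * C) - g • R - (Y t)⁻¹ * (B * Bᵀ) * (Y t)⁻¹) *ᵥ z t) s t := by
  have hdet : IsUnit (Y t).det := (isUnit_iff_isUnit_det _).1 hY.isUnit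
  have hYsymm : (Y t)ᵀ = Y t := by simpa using hY.isHermitian.eq
  have hGsymm : (Cᵀ * E⁻¹ * C)ᵀ = Cᵀ * E⁻¹ * C := by
    have hEsymm : Eᵀ = E := by simpa using hE.eq
    simp [Matrix.mul_assoc, transpose_nonsing_inv, hEsymm]
  have := HasDerivWithinAt.dotProduct_inv_mulVec hRiccati hY.isUnit hz
  rwa [show Y t * Cᵀ * E⁻¹ * C = Y t * (Cᵀ * E⁻¹ * C) by simp only [Matrix.mul_assoc],
    riccati_lyapunov_identity (nonsing_inv_mul _ hdet) (mul_nonsing_inv _ hdet) hYsymm hGsymm]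
    at this

end

theorem single_node_exponential_stability_general
    {n m p : ℕ}
    (A : ℝ → Matrix (Fin n) (Fin n) ℝ) (B : ℝ → Matrix (Fin n) (Fin m) ℝ)
    (C : ℝ → Matrix (Fin p) (Fin n) ℝ) (E : ℝ → Matrix (Fin p) (Fin p) ℝ)
    (ε₀ : ℝ) (hε₀ : 0 < ε₀)
    (hE : ∀ t ∈ Ici (0:ℝ), (E t - ε₀ • (1 : Matrix (Fin p) (Fin p) ℝ)).PosSemidef)
    (R : Matrix (Fin n) (Fin n) ℝ) (hR : R.PosDef)
    (γ : ℝ) (hγ : 0 < γ)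
    (Y : ℝ → Matrix (Fin n) (Fin n) ℝ)
    (α₁ α₂ : ℝ) (hα₁ : 0 < α₁) (hα₂ : 0 < α₂)
    (hYlb : ∀ t ∈ Ici (0:ℝ),
      (Y t - α₁ • (1 : Matrix (Fin n) (Fin n) ℝ)).PosSemidef)
    (hYub : ∀ t ∈ Ici (0:ℝ),
      (α₂ • (1 : Matrix (Fin n) (Fin n) ℝ) - Y t).PosSemidef)
    (hRiccati : ∀ t ∈ Ici (0:ℝ), ∀ a b,
      HasDerivWithinAt (fun s => Y s a b)
        ((A t * Y t + Y t * (A t)ᵀ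
          - Y t * ((C t)ᵀ * (E t)⁻¹ * C t - (γ ^ 2)⁻¹ • R) * Y t
          + B t * (B t)ᵀ) a b) (Ici 0) t) :
    ∃ c > (0:ℝ), ∃ lam > (0:ℝ), ∀ z : ℝ → Fin n → ℝ,
      (∀ t ∈ Ici (0:ℝ),
        HasDerivWithinAt z
          ((A t - (Y t * (C t)ᵀ * (E t)⁻¹) * C t).mulVec (z t)) (Ici 0) t) →
      ∀ t ∈ Ici (0:ℝ),
        Real.sqrt (∑ a, (z t a) ^ 2)
          ≤ c * Real.exp (-lam * t) * Real.sqrt (∑ a, (z 0 a) ^ 2) := by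
  obtain ⟨μ, hμ, hμR⟩ := hR.exists_pos_smul_one_le
  set K := (γ ^ 2)⁻¹ * μ * α₁
  refine ⟨√(α₂ / α₁), by positivity, K / 2, by positivity, fun z hz t ht => ?_⟩
  set V : ℝ → ℝ := fun s => z s ⬝ᵥ (Y s)⁻¹ *ᵥ z s
  have hYpd : ∀ s ∈ Ici (0:ℝ), (Y s).PosDef := fun s hs => PosDef.of_smul_one_le hα₁ (hYlb s hs)
  have hVle (s) (hs : s ∈ Ici (0:ℝ)) : V s ≤ α₁⁻¹ * (z s ⬝ᵥ z s) :=
    dotProduct_inv_mulVec_le hα₁ (hYlb s hs) (z s)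
  have hEpd : ∀ s ∈ Ici (0:ℝ), (E s).PosDef := fun s hs => PosDef.of_smul_one_le hε₀ (hE s hs)
  have hV (s) (hs : s ∈ Ici (0:ℝ)) := hasDerivWithinAt_riccati_lyapunov (hYpd s hs)
    (hEpd s hs).isHermitian (hRiccati s hs) (hz s hs)
  have hVt := le_mul_exp_of_hasDerivWithinAt_le_mul hV (fun s hs => calc
    _ ≤ -((γ ^ 2)⁻¹ * (z s ⬝ᵥ R *ᵥ z s)) :=
      dotProduct_mulVec_riccati_le (hEpd s hs) (hYpd s hs).inv.isHermitian _ _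
    _ ≤ -((γ ^ 2)⁻¹ * (μ * (z s ⬝ᵥ z s))) := by
      gcongr
      simpa only [dotProduct_smul_one_mulVec] using dotProduct_mulVec_le_of_le hμR (z s)
    _ ≤ -K * V s := by
      have := (le_inv_mul_iff₀ hα₁).1 (hVle s hs)
      simp only [K, neg_mul, neg_le_neg_iff, mul_assoc]
      gcongr) ht
  have hsum (x : Fin n → ℝ) : ∑ a, x a ^ 2 = x ⬝ᵥ x := by simp [dotProduct, sq]
  simp only [hsum, sub_zero] at hVt ⊢
  exact sqrt_le_sqrt_div_mul_exp_of_sandwich hα₁ hα₂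
    (inv_mul_dotProduct_le_dotProduct_inv_mulVec (hYpd t ht) (hYub t ht) (z t)) hVt
    (hVle 0 self_mem_Ici)

/-- a bounded uniformly positive definite solution of the
game-type Riccati differential equation with positive definite state weight
`R` yields, via the output-injection gain `L = YC'E⁻¹`, exponential stability
of the unforced filtering error dynamics `ż = (A − LC)z`. -/
theorem single_node_exponential_stability
    {n m p : ℕ}
    (A : ℝ → Matrix (Fin n) (Fin n) ℝ) (B : ℝ → Matrix (Fin n) (Fin m) ℝ)
    (C : ℝ → Matrix (Fin p) (Fin n) ℝ) (E : ℝ → Matrix (Fin p) (Fin p) ℝ)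
    (hAc : Continuous A) (hBc : Continuous B) (hCc : Continuous C)
    (hEc : Continuous E)
    (hAb : ∃ M, ∀ t ∈ Ici (0:ℝ), ∀ a b, |A t a b| ≤ M)
    (hBb : ∃ M, ∀ t ∈ Ici (0:ℝ), ∀ a b, |B t a b| ≤ M)
    (hCb : ∃ M, ∀ t ∈ Ici (0:ℝ), ∀ a b, |C t a b| ≤ M)
    (ε₀ : ℝ) (hε₀ : 0 < ε₀)
    (hEsymm : ∀ t ∈ Ici (0:ℝ), (E t).IsSymm)
    (hE : ∀ t ∈ Ici (0:ℝ), (E t - ε₀ • (1 : Matrix (Fin p) (Fin p) ℝ)).PosSemidef)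
    (R : Matrix (Fin n) (Fin n) ℝ) (hR : R.PosDef)
    (γ : ℝ) (hγ : 0 < γ)
    (X : Matrix (Fin n) (Fin n) ℝ) (hX : X.PosDef)
    (Y : ℝ → Matrix (Fin n) (Fin n) ℝ)
    (hYsymm : ∀ t ∈ Ici (0:ℝ), (Y t).IsSymm)
    (α₁ α₂ : ℝ) (hα₁ : 0 < α₁) (hα₂ : 0 < α₂)
    (hYlb : ∀ t ∈ Ici (0:ℝ),
      (Y t - α₁ • (1 : Matrix (Fin n) (Fin n) ℝ)).PosSemidef)
    (hYub : ∀ t ∈ Ici (0:ℝ),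
      (α₂ • (1 : Matrix (Fin n) (Fin n) ℝ) - Y t).PosSemidef)
    (hY0 : Y 0 = X⁻¹)
    (hRiccati : ∀ t ∈ Ici (0:ℝ), ∀ a b,
      HasDerivWithinAt (fun s => Y s a b)
        ((A t * Y t + Y t * (A t)ᵀ
          - Y t * ((C t)ᵀ * (E t)⁻¹ * C t - (γ ^ 2)⁻¹ • R) * Y t
          + B t * (B t)ᵀ) a b) (Ici 0) t) :
    ∃ c > (0:ℝ), ∃ lam > (0:ℝ), ∀ z : ℝ → Fin n → ℝ,
      (∀ t ∈ Ici (0:ℝ),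
        HasDerivWithinAt z
          ((A t - (Y t * (C t)ᵀ * (E t)⁻¹) * C t).mulVec (z t)) (Ici 0) t) →
      ∀ t ∈ Ici (0:ℝ),
        Real.sqrt (∑ a, (z t a) ^ 2)
          ≤ c * Real.exp (-lam * t) * Real.sqrt (∑ a, (z 0 a) ^ 2) :=
  single_node_exponential_stability_general A B C E ε₀ hε₀ hE R hR γ hγ Y α₁ α₂ hα₁ hα₂ hYlb hYub
    hRiccati
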